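/- Let V be an ℕ-graded vertex algebra. The functor S from A(V)-modules to ℕ-gradable weak V-modules satisfies the following universal property: for any A(V)-module M, any ℕ-gradable weak V-module W, and any A(V)-module map f : M → T(W), there exists a unique V-module map f̃ : S(M) → W such that the restriction of f̃ to the top level T(S(M)) equals f ∘ e_M^{−1}. -/

import Mathlib

open scoped BigOperators

/-- Generalized binomial coefficient `C(a, i)` for `a : ℤ`, `i : ℕ`, valued in `ℂ`. -/
noncomputable def gb (a : ℤ) (i : ℕ) : ℂ :=
  (∏ j ∈ Finset.range i, ((a : ℂ) - (j : ℂ))) / (Nat.factorial i : ℂ)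

/-- A vertex algebra, presented through the coefficient operators
`coeff u n = u_n = Res_x x^n Y(u,x)` of its vertex operator map, together with the
vacuum, truncation, creation and Borcherds (Jacobi) identity axioms. -/
structure VertexAlgebra (V : Type*) [AddCommGroup V] [Module ℂ V] where
  coeff : V → ℤ → V →ₗ[ℂ] V
  coeff_add : ∀ (u v : V) (n : ℤ), coeff (u + v) n = coeff u n + coeff v n
  coeff_smul : ∀ (c : ℂ) (u : V) (n : ℤ), coeff (c • u) n = c • coeff u n
  vac : V
  vac_coeff_neg_one : ∀ v : V, coeff vac (-1) v = v
  vac_coeff : ∀ n : ℤ, n ≠ -1 → coeff vac n = 0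
  trunc : ∀ u v : V, ∃ N : ℤ, ∀ n ≥ N, coeff u n v = 0
  creation : ∀ (u : V) (n : ℤ), 0 ≤ n → coeff u n vac = 0
  create_neg_one : ∀ u : V, coeff u (-1) vac = u
  borcherds : ∀ (u v w : V) (p q r : ℤ),
    (∑ᶠ i : ℕ, gb p i • coeff (coeff u (r + i) v) (p + q - i) w) =
    ∑ᶠ i : ℕ, ((-1 : ℂ) ^ i * gb r i) •
      (coeff u (p + r - i) (coeff v (q + i) w)
        - ((-1 : ℂ) ^ r) • coeff v (q + r - i) (coeff u (p + i) w))

/-- A module for a vertex algebra, presented through the coefficient operators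
`Yw u n = u_n = Res_x x^n Y_W(u,x)`, with weak associativity (in coefficient form:
for every `a b : ℤ`, the coefficient of `x₀^a x₂^b` in
`(x₀+x₂)^l Y_W(u,x₀+x₂) Y_W(v,x₂) w` equals that in `(x₀+x₂)^l Y_W(Y(u,x₀)v,x₂) w`,
where `(x₀+x₂)^n` is expanded in nonnegative powers of `x₂`) as the main axiom. -/
structure VAModule {V : Type*} [AddCommGroup V] [Module ℂ V] (A : VertexAlgebra V)
    (W : Type*) [AddCommGroup W] [Module ℂ W] where
  Yw : V → ℤ → W →ₗ[ℂ] W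
  Yw_add : ∀ (u v : V) (n : ℤ), Yw (u + v) n = Yw u n + Yw v n
  Yw_smul : ∀ (c : ℂ) (u : V) (n : ℤ), Yw (c • u) n = c • Yw u n
  vac_neg_one : ∀ w : W, Yw A.vac (-1) w = w
  vac_ne : ∀ n : ℤ, n ≠ -1 → Yw A.vac n = 0
  trunc : ∀ (u : V) (w : W), ∃ N : ℤ, ∀ n ≥ N, Yw u n w = 0
  weak_assoc : ∀ (u v : V) (w : W) (l : ℕ),
    (∀ n : ℤ, (l : ℤ) ≤ n → Yw u n w = 0) →
    ∀ a b : ℤ,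
      (∑ᶠ j : ℕ, gb (a + j) j • Yw u ((l : ℤ) - 1 - a - j) (Yw v ((j : ℤ) - b - 1) w)) =
      ∑ j ∈ Finset.range (l + 1),
        gb l j • Yw (A.coeff u ((l : ℤ) - j - a - 1) v) ((j : ℤ) - b - 1) w

/-- A ℤ-graded vertex algebra: a vertex algebra with an internal direct sum
decomposition `V = ⨁_{n∈ℤ} V_(n)` compatible with the vertex operator coefficients:
`u_n` maps `V_(k)` to `V_(k + m - n - 1)` for `u ∈ V_(m)`. -/
structure GradedVA (V : Type*) [AddCommGroup V] [Module ℂ V] extends VertexAlgebra V where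
  gr : ℤ → Submodule ℂ V
  internal : DirectSum.IsInternal gr
  vac_mem : vac ∈ gr 0
  coeff_grade : ∀ {m : ℤ} {u : V}, u ∈ gr m → ∀ (n : ℤ) {k : ℤ} {v : V}, v ∈ gr k →
    coeff u n v ∈ gr (k + m - n - 1)

/-- An ℕ-graded vertex algebra: `V_(n) = 0` for `n < 0`. -/
def GradedVA.IsNNGraded {V : Type*} [AddCommGroup V] [Module ℂ V] (A : GradedVA V) : Prop :=
  ∀ n : ℤ, n < 0 → A.gr n = ⊥

/-- The property that a family of coefficient operators `Yw u n = u_n` defines a weak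
module structure over the vertex algebra `A` on `W`: linearity in `u`, lower
truncation, the vacuum property `Y_W(1,x) = id`, and the Borcherds (Jacobi) identity. -/
def IsWeakModule {V W : Type*} [AddCommGroup V] [Module ℂ V] [AddCommGroup W] [Module ℂ W]
    (A : VertexAlgebra V) (Yw : V → ℤ → W →ₗ[ℂ] W) : Prop :=
  (∀ (u v : V) (n : ℤ), Yw (u + v) n = Yw u n + Yw v n) ∧
  (∀ (c : ℂ) (u : V) (n : ℤ), Yw (c • u) n = c • Yw u n) ∧
  (∀ (u : V) (w : W), ∃ N : ℤ, ∀ n ≥ N, Yw u n w = 0) ∧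
  (∀ w : W, Yw A.vac (-1) w = w) ∧
  (∀ n : ℤ, n ≠ -1 → Yw A.vac n = 0) ∧
  (∀ (u v : V) (w : W) (p q r : ℤ),
    (∑ᶠ i : ℕ, gb p i • Yw (A.coeff u (r + i) v) (p + q - i) w) =
    ∑ᶠ i : ℕ, ((-1 : ℂ) ^ i * gb r i) •
      (Yw u (p + r - i) (Yw v (q + i) w)
        - ((-1 : ℂ) ^ r) • Yw v (q + r - i) (Yw u (p + i) w)))

/-- An ℕ-grading on a weak module: an internal direct sum `W = ⨁ W_(n)` with
`W_(n) = 0` for `n < 0` and `u_n : W_(k) → W_(k + m - n - 1)` for `u ∈ V_(m)`. -/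
def IsNNGradedModule {V W : Type*} [AddCommGroup V] [Module ℂ V] [AddCommGroup W]
    [Module ℂ W] (A : GradedVA V) (Yw : V → ℤ → W →ₗ[ℂ] W)
    (wgr : ℤ → Submodule ℂ W) : Prop :=
  DirectSum.IsInternal wgr ∧ (∀ n : ℤ, n < 0 → wgr n = ⊥) ∧
  (∀ {m : ℤ} {u : V}, u ∈ A.gr m → ∀ (n : ℤ) {k : ℤ} {w : W}, w ∈ wgr k →
    Yw u n w ∈ wgr (k + m - n - 1))

/-- The top level `T(W)` of a module: the subspace of `w ∈ W` with `u_n w = 0`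
whenever `wt u - n - 1 < 0` for homogeneous `u`. -/
def topLevel {V W : Type*} [AddCommGroup V] [Module ℂ V] [AddCommGroup W] [Module ℂ W]
    (A : GradedVA V) (Yw : V → ℤ → W →ₗ[ℂ] W) : Submodule ℂ W where
  carrier := {w | ∀ (m : ℤ) (u : V), u ∈ A.gr m → ∀ n : ℤ, m - n - 1 < 0 → Yw u n w = 0}
  zero_mem' := by intro m u hu n hn; simp
  add_mem' := by
    intro a b ha hb m u hu n hn
    rw [map_add, ha m u hu n hn, hb m u hu n hn, add_zero]
  smul_mem' := by intro c a ha m u hu n hn; rw [map_smul, ha m u hu n hn, smul_zero]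

/-- A module for the Zhu algebra `A(V)` of an ℕ-graded vertex algebra `V`, encoded as
an action `ρ` of `V` on `M` which kills the spanning elements of `O(V)` and satisfies
`ρ(u * v) = ρ(u) ρ(v)` for the Zhu product `*`, with the vacuum acting as identity. -/
structure AVModule {V : Type*} [AddCommGroup V] [Module ℂ V] (A : GradedVA V)
    (M : Type*) [AddCommGroup M] [Module ℂ M] where
  ρ : V → M →ₗ[ℂ] M
  ρ_add : ∀ (u v : V), ρ (u + v) = ρ u + ρ v
  ρ_smul : ∀ (c : ℂ) (u : V), ρ (c • u) = c • ρ u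
  ρ_vac : ∀ w : M, ρ A.vac w = w
  ρ_O : ∀ (wu wv : ℕ) (u v : V), u ∈ A.gr (wu : ℤ) → v ∈ A.gr (wv : ℤ) →
    ∀ n : ℤ, n ≤ -2 →
      ρ (∑ j ∈ Finset.range (wu + 1), gb (wu : ℤ) j • A.coeff u (n + j) v) = 0
  ρ_mul : ∀ (wu : ℕ) (u : V), u ∈ A.gr (wu : ℤ) → ∀ (v : V) (w : M),
    ρ (∑ j ∈ Finset.range (wu + 1), gb (wu : ℤ) j • A.coeff u ((j : ℤ) - 1) v) w =
      ρ u (ρ v w)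

open TensorProduct

/-- The tensor algebra `T(V[t,t⁻¹])` on the affinization `V[t,t⁻¹] = V ⊗ ℂ[t,t⁻¹]`. -/
abbrev TVt (V : Type*) [AddCommGroup V] [Module ℂ V] :=
  TensorAlgebra ℂ (V ⊗[ℂ] AddMonoidAlgebra ℂ ℤ)

/-- The space `T(V[t,t⁻¹]) ⊗ M`. -/
abbrev TAM (V : Type*) [AddCommGroup V] [Module ℂ V]
    (M : Type*) [AddCommGroup M] [Module ℂ M] := TVt V ⊗[ℂ] M

/-- Left multiplication by `u(m) = u ⊗ t^m` on `T(V[t,t⁻¹]) ⊗ M`. -/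
noncomputable def act {V : Type*} [AddCommGroup V] [Module ℂ V]
    (M : Type*) [AddCommGroup M] [Module ℂ M] (u : V) (m : ℤ) :
    TAM V M →ₗ[ℂ] TAM V M :=
  LinearMap.rTensor M (LinearMap.mulLeft ℂ
    (TensorAlgebra.ι ℂ (u ⊗ₜ (AddMonoidAlgebra.ofCoeff (Finsupp.single m (1 : ℂ)) : AddMonoidAlgebra ℂ ℤ))))

/-- The embedding `M → T(V[t,t⁻¹]) ⊗ M`, `w ↦ 1 ⊗ w`. -/
noncomputable def ιM {V : Type*} [AddCommGroup V] [Module ℂ V]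
    (M : Type*) [AddCommGroup M] [Module ℂ M] : M →ₗ[ℂ] TAM V M :=
  TensorProduct.mk ℂ (TVt V) M 1

/-- Homogeneity of degree `d` in `T(V[t,t⁻¹]) ⊗ M`: elements of `M` have degree `0`,
and `u(m)` raises degree by `wt u - m - 1` for homogeneous `u`. -/
inductive Hdeg {V : Type*} [AddCommGroup V] [Module ℂ V] (A : GradedVA V)
    (M : Type*) [AddCommGroup M] [Module ℂ M] : ℤ → TAM V M → Prop
  | base (w : M) : Hdeg A M 0 (ιM M w)
  | step {d : ℤ} {x : TAM V M} (n m : ℤ) (u : V) (hu : u ∈ A.gr n)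
      (hx : Hdeg A M d x) : Hdeg A M (d + n - m - 1) (act M u m x)

/-- The smallest submodule containing `s` and stable under all operators `F u m`;
this is the `T(V[t,t⁻¹])`-submodule generated by `s` when `F = act`. -/
def endoClosure {V W : Type*} [AddCommGroup V] [Module ℂ V] [AddCommGroup W] [Module ℂ W]
    (F : V → ℤ → W →ₗ[ℂ] W) (s : Set W) : Submodule ℂ W :=
  sInf {N | s ⊆ (N : Set W) ∧ ∀ (u : V) (m : ℤ), ∀ x ∈ N, F u m x ∈ N}

lemma endoClosure_stable {V W : Type*} [AddCommGroup V] [Module ℂ V] [AddCommGroup W]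
    [Module ℂ W] (F : V → ℤ → W →ₗ[ℂ] W) (s : Set W) (u : V) (m : ℤ) {x : W}
    (hx : x ∈ endoClosure F s) : F u m x ∈ endoClosure F s := by
  simp only [endoClosure, Submodule.mem_sInf] at hx ⊢
  exact fun N hN => hN.2 u m x (hx N hN)

lemma subset_endoClosure {V W : Type*} [AddCommGroup V] [Module ℂ V] [AddCommGroup W]
    [Module ℂ W] (F : V → ℤ → W →ₗ[ℂ] W) (s : Set W) : s ⊆ (endoClosure F s : Set W) := by
  intro x hx
  simp only [endoClosure, SetLike.mem_coe, Submodule.mem_sInf]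
  exact fun N hN => hN.1 hx

/-- The generators of the submodule `ℐ`: (a) lower-truncation elements, (b) the
relation identifying the action of zero modes on `M` with the `A(V)`-action, and
(c) the iterate-formula relations. -/
def genI {V : Type*} [AddCommGroup V] [Module ℂ V] (A : GradedVA V)
    (M : Type*) [AddCommGroup M] [Module ℂ M] (ρ : AVModule A M) : Set (TAM V M) :=
  {y | ∃ (n m d : ℤ) (u : V) (x : TAM V M), u ∈ A.gr n ∧ Hdeg A M d x ∧
      n - m - 1 + d < 0 ∧ y = act M u m x} ∪
  {y | ∃ (n : ℤ) (u : V) (w : M), u ∈ A.gr n ∧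
      y = act M u (n - 1) (ιM M w) - ιM M (ρ.ρ u w)} ∪
  {y | ∃ (nu nv d p q : ℤ) (u v : V) (x : TAM V M), u ∈ A.gr nu ∧ v ∈ A.gr nv ∧
      Hdeg A M d x ∧ q < nv + d ∧ 0 ≤ nu - p - 1 + nv - q - 1 + d ∧
      y = act M u p (act M v q x) -
        ∑ i ∈ Finset.range (nv + d - q).toNat, ∑ j ∈ Finset.range ((nu + d).toNat + 1),
          (gb (p - nu - d) i * gb (nu + d) j) •
            act M (A.coeff u (p - nu - d - i + j) v) (q + nu + d + i - j) x}

/-- The submodule `ℐ ⊆ T(V[t,t⁻¹]) ⊗ M`. -/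
noncomputable def idealI {V : Type*} [AddCommGroup V] [Module ℂ V] (A : GradedVA V)
    (M : Type*) [AddCommGroup M] [Module ℂ M] (ρ : AVModule A M) :
    Submodule ℂ (TAM V M) :=
  endoClosure (act M) (genI A M ρ)

/-- `S₁(M) = (T(V[t,t⁻¹]) ⊗ M)/ℐ`. -/
abbrev S1 {V : Type*} [AddCommGroup V] [Module ℂ V] (A : GradedVA V)
    (M : Type*) [AddCommGroup M] [Module ℂ M] (ρ : AVModule A M) :=
  TAM V M ⧸ idealI A M ρ

/-- The induced action of `u(m)` on `S₁(M)`. -/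
noncomputable def act1 {V : Type*} [AddCommGroup V] [Module ℂ V] (A : GradedVA V)
    (M : Type*) [AddCommGroup M] [Module ℂ M] (ρ : AVModule A M) (u : V) (m : ℤ) :
    S1 A M ρ →ₗ[ℂ] S1 A M ρ :=
  Submodule.mapQ _ _ (act M u m)
    (fun _ hx => endoClosure_stable (act M) (genI A M ρ) u m hx)

/-- The generators of `𝒥 ⊆ S₁(M)`: the residue-vanishing elements
`Res_{x₀}Res_{x₂} x₀^m x₂^{K+wt v-m-deg w-2} (x₀+x₂)^{wt u+deg w}
Y(Y(u,x₀)v,x₂)w` (in component form) for homogeneous `u, v`, homogeneous `w` of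
degree `d`, and `m ≤ K - 2d - 2`. -/
def genJ {V : Type*} [AddCommGroup V] [Module ℂ V] (A : GradedVA V)
    (M : Type*) [AddCommGroup M] [Module ℂ M] (ρ : AVModule A M) : Set (S1 A M ρ) :=
  {y | ∃ (wu wv : ℕ) (d K m : ℤ) (u v : V) (x : TAM V M),
      u ∈ A.gr (wu : ℤ) ∧ v ∈ A.gr (wv : ℤ) ∧ Hdeg A M d x ∧ m ≤ K - 2 * d - 2 ∧
      y = (idealI A M ρ).mkQ
        (∑ j ∈ Finset.range (((wu : ℤ) + d).toNat + 1),
          gb ((wu : ℤ) + d) j •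
            act M (A.coeff u ((j : ℤ) + m) v) (K + (wu : ℤ) + (wv : ℤ) - j - m - 2) x)}

/-- The submodule `𝒥 ⊆ S₁(M)`. -/
noncomputable def idealJ {V : Type*} [AddCommGroup V] [Module ℂ V] (A : GradedVA V)
    (M : Type*) [AddCommGroup M] [Module ℂ M] (ρ : AVModule A M) :
    Submodule ℂ (S1 A M ρ) :=
  endoClosure (act1 A M ρ) (genJ A M ρ)

/-- `S(M) = S₁(M)/𝒥`. -/
abbrev SM {V : Type*} [AddCommGroup V] [Module ℂ V] (A : GradedVA V)
    (M : Type*) [AddCommGroup M] [Module ℂ M] (ρ : AVModule A M) :=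
  S1 A M ρ ⧸ idealJ A M ρ

/-- The coefficient operators `Y_{S(M)}(u, x)` on `S(M)`, induced by `Y_t`. -/
noncomputable def act2 {V : Type*} [AddCommGroup V] [Module ℂ V] (A : GradedVA V)
    (M : Type*) [AddCommGroup M] [Module ℂ M] (ρ : AVModule A M) (u : V) (m : ℤ) :
    SM A M ρ →ₗ[ℂ] SM A M ρ :=
  Submodule.mapQ _ _ (act1 A M ρ u m)
    (fun _ hx => endoClosure_stable (act1 A M ρ) (genJ A M ρ) u m hx)

/-- The canonical map `e_M : M → S(M)` induced by `w ↦ 1 ⊗ w`. -/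
noncomputable def eM {V : Type*} [AddCommGroup V] [Module ℂ V] (A : GradedVA V)
    (M : Type*) [AddCommGroup M] [Module ℂ M] (ρ : AVModule A M) : M →ₗ[ℂ] SM A M ρ :=
  (idealJ A M ρ).mkQ.comp ((idealI A M ρ).mkQ.comp (ιM M))


/-!
Applying a word of modes of negative total degree to a top-level vector of `W` gives zero:
move a mode of negative degree to the right with the commutator formula, the commutator terms
being shorter words of the same degree. Consequently, on the submodule generated by `T(W)`
the Borcherds identity truncates to the iterate formula and to the residue-vanishing
relations, so the action `u ⊗ t^m ↦ u_m` of `T(V[t,t⁻¹])` on `f(M)` descends to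
`S(M) = (T(V[t,t⁻¹]) ⊗ M)/ℐ/𝒥`. Uniqueness holds because `S(M)` is generated by `e_M(M)`.
-/

open Finset

lemma gb_eq_choose (a : ℤ) (i : ℕ) : gb a i = Ring.choose (a : ℂ) i := by
  rw [Ring.choose_eq_smul, gb, ← Polynomial.aeval_eq_smeval, Polynomial.aeval_def,
    Polynomial.eval₂_eq_eval_map, descPochhammer_map, descPochhammer_eval_eq_prod_range,
    smul_eq_mul, div_eq_inv_mul]

lemma gb_zero_right (a : ℤ) : gb a 0 = 1 := by
  rw [gb_eq_choose, Ring.choose_zero_right]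

lemma gb_zero_left {i : ℕ} (hi : i ≠ 0) : gb 0 i = 0 := by
  rw [gb_eq_choose, Int.cast_zero, Ring.choose_zero_pos ℂ (Nat.pos_of_ne_zero hi)]

lemma gb_natCast_of_lt {l i : ℕ} (h : l < i) : gb l i = 0 := by
  rw [gb_eq_choose, Int.cast_natCast, Ring.choose_natCast, Nat.choose_eq_zero_of_lt h,
    Nat.cast_zero]

lemma Ring.sum_antidiagonal_choose_mul_neg_one_pow_mul_choose {R : Type*} [CommRing R]
    [BinomialRing R] (a : R) (s : ℕ) :
    ∑ z ∈ antidiagonal s, Ring.choose a z.1 * ((-1) ^ z.2 * Ring.choose (a - z.1) z.2) =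
      0 ^ s := by
  have hterm : ∀ z ∈ antidiagonal s,
      Ring.choose a z.1 * ((-1) ^ z.2 * Ring.choose (a - z.1) z.2) =
        s.choose z.1 • (1 ^ z.1 * (-1) ^ z.2) * Ring.choose a s := by
    intro z hz
    rw [HasAntidiagonal.mem_antidiagonal] at hz
    have h := Ring.choose_smul_choose a (Nat.le.intro hz)
    rw [← hz, Nat.add_sub_cancel_left, nsmul_eq_mul] at h
    rw [← hz, nsmul_eq_mul]
    linear_combination -(-1 : R) ^ z.2 * h
  rw [sum_congr rfl hterm, ← sum_mul, ← (Commute.one_left (-1 : R)).add_pow', add_neg_cancel]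
  cases s <;> simp

lemma sum_range_sum_range_gb_smul {W : Type*} [AddCommGroup W] [Module ℂ W] (a : ℤ) (K : ℕ)
    (G : ℕ → W) (hG : ∀ s, K ≤ s → G s = 0) :
    ∑ i ∈ range K, ∑ k ∈ range K, (gb a i * ((-1) ^ k * gb (a - i) k)) • G (i + k) = G 0 := by
  set c : ℕ × ℕ → ℂ := fun z => gb a z.1 * ((-1) ^ z.2 * gb (a - z.1) z.2)
  have hfiber : ∀ s ∈ range (2 * K),
      ∑ z ∈ (range K ×ˢ range K).filter (fun z => z.1 + z.2 = s), c z • G (z.1 + z.2) =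
        (0 : ℂ) ^ s • G s := by
    intro s _
    rw [sum_congr rfl fun z hz => by rw [(mem_filter.1 hz).2], ← sum_smul]
    by_cases hs : K ≤ s
    · simp [hG s hs]
    have hanti : (range K ×ˢ range K).filter (fun z => z.1 + z.2 = s) = antidiagonal s := by
      ext z
      simp only [mem_filter, mem_product, mem_range, HasAntidiagonal.mem_antidiagonal]
      omega
    rw [hanti, ← Ring.sum_antidiagonal_choose_mul_neg_one_pow_mul_choose (a : ℂ) s]
    simp [c, gb_eq_choose]
  rw [← sum_product', ← sum_fiberwise_of_maps_to (g := fun z => z.1 + z.2)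
    (t := range (2 * K)) (fun z hz => by simp only [mem_product, mem_range] at hz ⊢; omega),
    sum_congr rfl hfiber]
  rw [sum_eq_single 0 (fun s _ hs => by rw [zero_pow hs, zero_smul])
    (fun h0 => by rw [hG 0 (by simpa using h0)]; simp), pow_zero, one_smul]

lemma finsum_eq_sum_range_of_eq_zero {W : Type*} [AddCommGroup W] (f : ℕ → W) (N : ℕ)
    (hf : ∀ i, N ≤ i → f i = 0) : ∑ᶠ i, f i = ∑ i ∈ range N, f i :=
  finsum_eq_sum_of_support_subset f fun i hi => by
    by_contra h
    exact hi (hf i (by simpa using h))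

lemma VertexAlgebra.coeff_zero_left {V : Type*} [AddCommGroup V] [Module ℂ V]
    (A : VertexAlgebra V) (n : ℤ) : A.coeff 0 n = 0 := by
  simpa using A.coeff_smul 0 0 n

namespace IsWeakModule

variable {V W : Type*} [AddCommGroup V] [Module ℂ V] [AddCommGroup W] [Module ℂ W]
  {A : VertexAlgebra V} {Yw : V → ℤ → W →ₗ[ℂ] W}

lemma map_zero_left (hW : IsWeakModule A Yw) (n : ℤ) : Yw 0 n = 0 := by
  simpa using hW.2.1 0 0 n

lemma commutator (hW : IsWeakModule A Yw) (u v : V) {N : ℕ}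
    (hN : ∀ i : ℕ, N ≤ i → A.coeff u i v = 0) (p q : ℤ) (y : W) :
    Yw u p (Yw v q y) =
      Yw v q (Yw u p y) + ∑ i ∈ range N, gb p i • Yw (A.coeff u i v) (p + q - i) y := by
  have h := hW.2.2.2.2.2 u v y p q 0
  rw [finsum_eq_sum_range_of_eq_zero _ N fun i hi => by
      rw [zero_add, hN i hi, hW.map_zero_left, LinearMap.zero_apply, smul_zero],
    finsum_eq_single _ 0 fun i hi => by rw [gb_zero_left hi, mul_zero, zero_smul]] at h
  simp only [gb_zero_right, zero_add, add_zero, sub_zero, one_smul, mul_one, pow_zero,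
    Nat.cast_zero, zpow_zero] at h
  rw [h, add_sub_cancel]

lemma borcherds_of_trunc (hW : IsWeakModule A Yw) (u v : V) (y : W) {l N : ℕ}
    (hu : ∀ n : ℤ, l ≤ n → Yw u n y = 0) (q r : ℤ)
    (hv : ∀ k : ℕ, N ≤ k → Yw v (q + k) y = 0) :
    ∑ j ∈ range (l + 1), gb l j • Yw (A.coeff u (r + j) v) (l + q - j) y =
      ∑ k ∈ range N, ((-1) ^ k * gb r k) • Yw u (l + r - k) (Yw v (q + k) y) := by
  have h := hW.2.2.2.2.2 u v y l q r
  rw [finsum_eq_sum_range_of_eq_zero _ (l + 1) fun j hj => by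
      rw [gb_natCast_of_lt hj, zero_smul]] at h
  rw [h, finsum_eq_sum_range_of_eq_zero _ N fun k hk => by
      rw [hv k hk, hu (l + k) (by omega), map_zero, map_zero, smul_zero, sub_zero, smul_zero]]
  refine sum_congr rfl fun k _ => ?_
  rw [hu (l + k) (by omega), map_zero, smul_zero, sub_zero]

end IsWeakModule

/-- A mode `u_m` of a homogeneous vector `u ∈ V_(wt)`. -/
structure HomogeneousMode {V : Type*} [AddCommGroup V] [Module ℂ V] (A : GradedVA V) where
  wt : ℤ
  vec : V
  idx : ℤ
  mem : vec ∈ A.gr wt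

namespace HomogeneousMode

variable {V W : Type*} [AddCommGroup V] [Module ℂ V] [AddCommGroup W] [Module ℂ W]
  {A : GradedVA V}

def deg (e : HomogeneousMode A) : ℤ := e.wt - e.idx - 1

/-- The `i`-th term `(u_i v)_{m+n-i}` of the commutator `[u_m, v_n]`. -/
def commTerm (e₁ e₂ : HomogeneousMode A) (i : ℕ) : HomogeneousMode A :=
  ⟨e₂.wt + e₁.wt - i - 1, A.coeff e₁.vec i e₂.vec, e₁.idx + e₂.idx - i,
    A.coeff_grade e₁.mem i e₂.mem⟩

lemma deg_commTerm (e₁ e₂ : HomogeneousMode A) (i : ℕ) :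
    (e₁.commTerm e₂ i).deg = e₁.deg + e₂.deg := by
  simp only [deg, commTerm]
  ring

def word (Yw : V → ℤ → W →ₗ[ℂ] W) (L : List (HomogeneousMode A)) : Module.End ℂ W :=
  (L.map fun e => Yw e.vec e.idx).prod

def wordDeg (L : List (HomogeneousMode A)) : ℤ := (L.map deg).sum

variable {Yw : V → ℤ → W →ₗ[ℂ] W}

lemma word_nil (y : W) : word Yw ([] : List (HomogeneousMode A)) y = y := rfl

lemma word_cons (L : List (HomogeneousMode A)) (e : HomogeneousMode A) (y : W) :
    word Yw (e :: L) y = Yw e.vec e.idx (word Yw L y) := by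
  simp [word, Module.End.mul_apply]

lemma word_append_cons (L₁ L₂ : List (HomogeneousMode A)) (e : HomogeneousMode A) (y : W) :
    word Yw (L₁ ++ e :: L₂) y = word Yw L₁ (Yw e.vec e.idx (word Yw L₂ y)) := by
  simp [word, List.prod_append, Module.End.mul_apply]

lemma word_swap (hW : IsWeakModule A.toVertexAlgebra Yw) (L₁ L₂ : List (HomogeneousMode A))
    (e₁ e₂ : HomogeneousMode A) {N : ℕ} (hN : ∀ i : ℕ, N ≤ i → A.coeff e₁.vec i e₂.vec = 0)
    (y : W) :
    word Yw (L₁ ++ e₁ :: e₂ :: L₂) y = word Yw (L₁ ++ e₂ :: e₁ :: L₂) y +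
      ∑ i ∈ range N, gb e₁.idx i • word Yw (L₁ ++ e₁.commTerm e₂ i :: L₂) y := by
  simp only [word_append_cons, word_cons]
  rw [hW.commutator e₁.vec e₂.vec hN, map_add, map_sum]
  simp only [map_smul, commTerm]

/-- Push a mode of negative degree to the right until it hits the top-level vector; the
commutator terms are shorter words of the same degree. -/
lemma word_append_cons_apply_eq_zero (hW : IsWeakModule A.toVertexAlgebra Yw) {t : W}
    (ht : t ∈ topLevel A Yw) {k : ℕ}
    (IH : ∀ L : List (HomogeneousMode A), L.length < k → wordDeg L < 0 → word Yw L t = 0)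
    (L₂ : List (HomogeneousMode A)) :
    ∀ (L₁ : List (HomogeneousMode A)) (e : HomogeneousMode A), e.deg < 0 →
      (L₁ ++ e :: L₂).length = k → wordDeg (L₁ ++ e :: L₂) < 0 →
      word Yw (L₁ ++ e :: L₂) t = 0 := by
  induction L₂ with
  | nil =>
    intro L₁ e he _ _
    rw [word_append_cons, word_nil, ht e.wt e.vec e.mem e.idx he, map_zero]
  | cons e₂ L₂ ih =>
    intro L₁ e he hlen hdeg
    by_cases he₂ : e₂.deg < 0
    · simpa using ih (L₁ ++ [e]) e₂ he₂ (by simpa using hlen) (by simpa using hdeg)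
    obtain ⟨N, hN⟩ := A.trunc e.vec e₂.vec
    rw [word_swap hW L₁ L₂ e e₂ (N := N.toNat) fun i hi => hN i (by omega)]
    have hfirst : word Yw (L₁ ++ e₂ :: e :: L₂) t = 0 := by
      simpa using ih (L₁ ++ [e₂]) e he (by simpa [add_comm] using hlen)
        (by simp [wordDeg] at hdeg ⊢; omega)
    have hterms : ∀ i : ℕ, word Yw (L₁ ++ e.commTerm e₂ i :: L₂) t = 0 := fun i =>
      IH _ (by simp at hlen ⊢; omega) (by simp [wordDeg, deg_commTerm] at hdeg ⊢; omega)
    simp [hfirst, hterms]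

theorem word_apply_eq_zero (hW : IsWeakModule A.toVertexAlgebra Yw) {t : W}
    (ht : t ∈ topLevel A Yw) (L : List (HomogeneousMode A)) (hL : wordDeg L < 0) :
    word Yw L t = 0 := by
  induction hk : L.length using Nat.strong_induction_on generalizing L with
  | _ k IH =>
    obtain ⟨e, heL, he⟩ : ∃ e ∈ L, e.deg < 0 := by
      by_contra! h
      exact hL.not_ge (List.sum_nonneg (by simpa using h))
    obtain ⟨L₁, L₂, rfl⟩ := List.append_of_mem heL
    exact word_append_cons_apply_eq_zero hW ht (fun L' hL' hdeg => IH _ hL' L' hdeg rfl)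
      L₂ L₁ e he hk hL

end HomogeneousMode

lemma IsWeakModule.iterate_of_trunc {V W : Type*} [AddCommGroup V] [Module ℂ V]
    [AddCommGroup W] [Module ℂ W] {A : VertexAlgebra V} {Yw : V → ℤ → W →ₗ[ℂ] W}
    (hW : IsWeakModule A Yw) (u v : V) (y : W) {l K : ℕ} {q : ℤ}
    (hu : ∀ n : ℤ, l ≤ n → Yw u n y = 0) (hv : ∀ n : ℤ, q + K ≤ n → Yw v n y = 0) (p : ℤ) :
    Yw u p (Yw v q y) = ∑ i ∈ range K, ∑ j ∈ range (l + 1),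
      (gb (p - l) i * gb l j) • Yw (A.coeff u (p - l - i + j) v) (q + l + i - j) y := by
  set G : ℕ → W := fun s => Yw u (p - s) (Yw v (q + s) y)
  have hG : ∀ s, K ≤ s → G s = 0 := fun s hs => by simp [G, hv (q + s) (by omega)]
  calc Yw u p (Yw v q y) = G 0 := by simp [G]
    _ = ∑ i ∈ range K, gb (p - l) i • ∑ k ∈ range K, ((-1) ^ k * gb (p - l - i) k) •
          Yw u (l + (p - l - i) - k) (Yw v ((q + i) + k) y) := by
        rw [← sum_range_sum_range_gb_smul (p - l) K G hG]
        refine sum_congr rfl fun i _ => ?_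
        rw [smul_sum]
        refine sum_congr rfl fun k _ => ?_
        rw [smul_smul, show l + (p - l - i) - k = p - ((i + k : ℕ) : ℤ) by push_cast; ring,
          show q + i + k = q + ((i + k : ℕ) : ℤ) by push_cast; ring]
    _ = ∑ i ∈ range K, gb (p - l) i • ∑ j ∈ range (l + 1),
          gb l j • Yw (A.coeff u ((p - l - i) + j) v) (l + (q + i) - j) y := by
        refine sum_congr rfl fun i _ => ?_
        rw [hW.borcherds_of_trunc (N := K) u v y hu (q + i) (p - l - i)
          fun k hk => hv _ (by omega)]
    _ = _ := by
        simp only [smul_sum, smul_smul,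
          show ∀ i j : ℕ, (l : ℤ) + (q + i) - j = q + l + i - j from fun i j => by ring]

def IsTopDescendant {V W : Type*} [AddCommGroup V] [Module ℂ V] [AddCommGroup W] [Module ℂ W]
    (A : GradedVA V) (Yw : V → ℤ → W →ₗ[ℂ] W) (d : ℤ) (y : W) : Prop :=
  ∃ (L : List (HomogeneousMode A)) (t : W), t ∈ topLevel A Yw ∧
    HomogeneousMode.wordDeg L = d ∧ y = HomogeneousMode.word Yw L t

namespace IsTopDescendant

open HomogeneousMode

variable {V W : Type*} [AddCommGroup V] [Module ℂ V] [AddCommGroup W] [Module ℂ W]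
  {A : GradedVA V} {Yw : V → ℤ → W →ₗ[ℂ] W} {d : ℤ} {y : W}

lemma of_mem_topLevel {t : W} (ht : t ∈ topLevel A Yw) : IsTopDescendant A Yw 0 t :=
  ⟨[], t, ht, rfl, rfl⟩

lemma mode (hy : IsTopDescendant A Yw d y) {n : ℤ} {u : V} (hu : u ∈ A.gr n) (m : ℤ) :
    IsTopDescendant A Yw (d + n - m - 1) (Yw u m y) := by
  obtain ⟨L, t, ht, rfl, rfl⟩ := hy
  refine ⟨⟨n, u, m, hu⟩ :: L, t, ht, ?_, (word_cons L ⟨n, u, m, hu⟩ t).symm⟩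
  simp only [wordDeg, List.map_cons, List.sum_cons, deg]
  ring

lemma eq_zero_of_neg (hW : IsWeakModule A.toVertexAlgebra Yw)
    (hy : IsTopDescendant A Yw d y) (hd : d < 0) : y = 0 := by
  obtain ⟨L, t, ht, rfl, rfl⟩ := hy
  exact word_apply_eq_zero hW ht L hd

lemma mode_eq_zero (hW : IsWeakModule A.toVertexAlgebra Yw) (hy : IsTopDescendant A Yw d y)
    {n m : ℤ} {u : V} (hu : u ∈ A.gr n) (h : n - m - 1 + d < 0) : Yw u m y = 0 :=
  (hy.mode hu m).eq_zero_of_neg hW (by omega)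

lemma iterate_formula (hA : A.IsNNGraded) (hW : IsWeakModule A.toVertexAlgebra Yw)
    (hy : IsTopDescendant A Yw d y) {nu nv : ℤ} {u v : V} (hu : u ∈ A.gr nu) (hv : v ∈ A.gr nv)
    (p q : ℤ) :
    Yw u p (Yw v q y) =
      ∑ i ∈ range (nv + d - q).toNat, ∑ j ∈ range ((nu + d).toNat + 1),
        (gb (p - nu - d) i * gb (nu + d) j) •
          Yw (A.coeff u (p - nu - d - i + j) v) (q + nu + d + i - j) y := by
  rcases lt_or_ge (nu + d) 0 with hneg | hnonneg
  · rcases lt_or_ge d 0 with hd | hd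
    · simp [hy.eq_zero_of_neg hW hd]
    · have hu0 : u = 0 := by simpa [hA nu (by omega)] using hu
      simp [hu0, hW.map_zero_left, VertexAlgebra.coeff_zero_left]
  obtain ⟨l, hl⟩ := Int.eq_ofNat_of_zero_le hnonneg
  rw [show p - nu - d = p - l by omega, show q + nu + d = q + l by omega, hl, Int.toNat_natCast]
  exact hW.iterate_of_trunc u v y (fun n hn => hy.mode_eq_zero hW hu (by omega))
    (fun n hn => hy.mode_eq_zero hW hv (by omega)) p

lemma residue_sum_eq_zero (hW : IsWeakModule A.toVertexAlgebra Yw)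
    (hy : IsTopDescendant A Yw d y) {wu : ℕ} {nv K m : ℤ} {u v : V} (hu : u ∈ A.gr wu)
    (hv : v ∈ A.gr nv) (hm : m ≤ K - 2 * d - 2) :
    ∑ j ∈ range ((wu + d).toNat + 1), gb (wu + d) j •
      Yw (A.coeff u (j + m) v) (K + wu + nv - j - m - 2) y = 0 := by
  rcases lt_or_ge d 0 with hd | hd
  · simp [hy.eq_zero_of_neg hW hd]
  obtain ⟨l, hl⟩ := Int.eq_ofNat_of_zero_le (show 0 ≤ (wu : ℤ) + d by omega)
  have h := hW.borcherds_of_trunc u v y (l := l) (N := 0)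
    (fun n hn => hy.mode_eq_zero hW hu (by omega)) (K + nv - m - d - 2) m
    fun k _ => hy.mode_eq_zero hW hv (by omega)
  rw [sum_range_zero] at h
  rw [hl, Int.toNat_natCast, ← h]
  refine sum_congr rfl fun j _ => ?_
  rw [add_comm (j : ℤ) m, show K + wu + nv - j - m - 2 = l + (K + nv - m - d - 2) - j by omega]

end IsTopDescendant

section Evaluation

variable {V W : Type*} [AddCommGroup V] [Module ℂ V] [AddCommGroup W] [Module ℂ W]
  {M : Type*} [AddCommGroup M] [Module ℂ M] {Yw : V → ℤ → W →ₗ[ℂ] W}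

def modeLinearMap (hadd : ∀ (u v : V) (n : ℤ), Yw (u + v) n = Yw u n + Yw v n)
    (hsmul : ∀ (c : ℂ) (u : V) (n : ℤ), Yw (c • u) n = c • Yw u n) (m : ℤ) :
    V →ₗ[ℂ] Module.End ℂ W where
  toFun u := Yw u m
  map_add' u v := hadd u v m
  map_smul' c u := hsmul c u m

noncomputable def leftMul (V M : Type*) [AddCommGroup V] [Module ℂ V] [AddCommGroup M]
    [Module ℂ M] : TVt V →ₐ[ℂ] Module.End ℂ (TAM V M) :=
  (Module.End.rTensorAlgHom ℂ (TVt V) M).comp (Algebra.lmul ℂ (TVt V))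

lemma leftMul_tmul (a b : TVt V) (w : M) : leftMul V M a (b ⊗ₜ w) = (a * b) ⊗ₜ w := rfl

lemma act_eq_leftMul (u : V) (m : ℤ) :
    act M u m = leftMul V M (TensorAlgebra.ι ℂ
      (u ⊗ₜ (AddMonoidAlgebra.ofCoeff (Finsupp.single m (1 : ℂ)) : AddMonoidAlgebra ℂ ℤ))) :=
  rfl

lemma submodule_eq_top_of_act_mem (N : Submodule ℂ (TAM V M)) (hι : ∀ w, ιM M w ∈ N)
    (hact : ∀ (u : V) (m : ℤ), ∀ z ∈ N, act M u m z ∈ N) : N = ⊤ := by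
  have hgen : ∀ x : V ⊗[ℂ] AddMonoidAlgebra ℂ ℤ, ∀ z ∈ N,
      leftMul V M (TensorAlgebra.ι ℂ x) z ∈ N := by
    intro x
    induction x using TensorProduct.induction_on with
    | zero => simp
    | tmul u p =>
      induction p using AddMonoidAlgebra.induction_on with
      | of m => exact hact u m
      | add p p' hp hp' =>
        intro z hz
        rw [TensorProduct.tmul_add, map_add, map_add, LinearMap.add_apply]
        exact N.add_mem (hp z hz) (hp' z hz)
      | smul c p hp =>
        intro z hz
        rw [TensorProduct.tmul_smul, map_smul, map_smul, LinearMap.smul_apply]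
        exact N.smul_mem c (hp z hz)
    | add x x' hx hx' =>
      intro z hz
      rw [map_add, map_add, LinearMap.add_apply]
      exact N.add_mem (hx z hz) (hx' z hz)
  have hmul : ∀ a : TVt V, ∀ z ∈ N, leftMul V M a z ∈ N := by
    intro a
    induction a using TensorAlgebra.induction with
    | algebraMap c =>
      intro z hz
      rw [AlgHom.commutes, Module.algebraMap_end_apply]
      exact N.smul_mem c hz
    | ι x => exact hgen x
    | mul a b ha hb =>
      intro z hz
      rw [map_mul, Module.End.mul_apply]
      exact ha _ (hb z hz)
    | add a b ha hb =>
      intro z hz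
      rw [map_add, LinearMap.add_apply]
      exact N.add_mem (ha z hz) (hb z hz)
  refine Submodule.eq_top_iff'.2 fun z => ?_
  induction z using TensorProduct.induction_on with
  | zero => exact N.zero_mem
  | tmul a w =>
    rw [← mul_one a, ← leftMul_tmul]
    exact hmul a _ (hι w)
  | add x y hx hy => exact N.add_mem hx hy

variable (hadd : ∀ (u v : V) (n : ℤ), Yw (u + v) n = Yw u n + Yw v n)
  (hsmul : ∀ (c : ℂ) (u : V) (n : ℤ), Yw (c • u) n = c • Yw u n)

/-- The action of `T(V[t,t⁻¹])` on `W` in which `u ⊗ t^m` acts as `u_m`. -/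
noncomputable def tensorAlgebraAction : TVt V →ₐ[ℂ] Module.End ℂ W :=
  TensorAlgebra.lift ℂ <| Finsupp.lsum ℂ (modeLinearMap hadd hsmul) ∘ₗ
    (TensorProduct.finsuppScalarRight ℂ ℂ V ℤ).toLinearMap ∘ₗ
    LinearMap.lTensor V (AddMonoidAlgebra.coeffLinearEquiv ℂ).toLinearMap

lemma tensorAlgebraAction_ι (u : V) (m : ℤ) :
    tensorAlgebraAction hadd hsmul (TensorAlgebra.ι ℂ
      (u ⊗ₜ (AddMonoidAlgebra.ofCoeff (Finsupp.single m (1 : ℂ)) : AddMonoidAlgebra ℂ ℤ))) =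
      Yw u m := by
  simp only [tensorAlgebraAction, TensorAlgebra.lift_ι_apply, LinearMap.comp_apply,
    LinearMap.lTensor_tmul, LinearEquiv.coe_coe, AddMonoidAlgebra.coeffLinearEquiv_apply,
    TensorProduct.finsuppScalarRight_apply_tmul]
  rw [Finsupp.sum_single_index (by rw [zero_smul, Finsupp.single_zero]), one_smul,
    Finsupp.lsum_single]
  rfl

noncomputable def tensorEval (f : M →ₗ[ℂ] W) : TAM V M →ₗ[ℂ] W :=
  TensorProduct.lift (LinearMap.lcomp ℂ W f ∘ₗ (tensorAlgebraAction hadd hsmul).toLinearMap)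

lemma tensorEval_tmul (f : M →ₗ[ℂ] W) (a : TVt V) (w : M) :
    tensorEval hadd hsmul f (a ⊗ₜ w) = tensorAlgebraAction hadd hsmul a (f w) := rfl

lemma tensorEval_ιM (f : M →ₗ[ℂ] W) (w : M) : tensorEval hadd hsmul f (ιM M w) = f w := by
  rw [ιM, TensorProduct.mk_apply, tensorEval_tmul, map_one, Module.End.one_apply]

lemma tensorEval_leftMul (f : M →ₗ[ℂ] W) (a : TVt V) (z : TAM V M) :
    tensorEval hadd hsmul f (leftMul V M a z) =
      tensorAlgebraAction hadd hsmul a (tensorEval hadd hsmul f z) := by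
  induction z using TensorProduct.induction_on with
  | zero => simp only [map_zero]
  | tmul b w =>
    rw [leftMul_tmul, tensorEval_tmul, tensorEval_tmul, map_mul, Module.End.mul_apply]
  | add x y hx hy => simp only [map_add, hx, hy]

lemma tensorEval_act (f : M →ₗ[ℂ] W) (u : V) (m : ℤ) (z : TAM V M) :
    tensorEval hadd hsmul f (act M u m z) = Yw u m (tensorEval hadd hsmul f z) := by
  rw [act_eq_leftMul, tensorEval_leftMul, tensorAlgebraAction_ι]

end Evaluation

lemma Submodule.liftQ_mapQ_apply {X Y : Type*} [AddCommGroup X] [Module ℂ X] [AddCommGroup Y]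
    [Module ℂ Y] {p : Submodule ℂ X} {G : X →ₗ[ℂ] Y} (hG : p ≤ LinearMap.ker G)
    {T : X →ₗ[ℂ] X} (hT : p ≤ p.comap T) {S : Y →ₗ[ℂ] Y} (hGT : ∀ x, G (T x) = S (G x))
    (ξ : X ⧸ p) : p.liftQ G hG (p.mapQ p T hT ξ) = S (p.liftQ G hG ξ) := by
  obtain ⟨x, rfl⟩ := p.mkQ_surjective ξ
  rw [Submodule.mkQ_apply, Submodule.mapQ_apply, Submodule.liftQ_apply, Submodule.liftQ_apply,
    hGT]

lemma endoClosure_le {V X : Type*} [AddCommGroup V] [Module ℂ V] [AddCommGroup X] [Module ℂ X]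
    {F : V → ℤ → X →ₗ[ℂ] X} {s : Set X} {N : Submodule ℂ X} (hs : s ⊆ N)
    (hN : ∀ (u : V) (m : ℤ), ∀ x ∈ N, F u m x ∈ N) : endoClosure F s ≤ N :=
  sInf_le ⟨hs, hN⟩

section UniversalProperty

variable {V : Type*} [AddCommGroup V] [Module ℂ V] {A : GradedVA V}
  {M : Type*} [AddCommGroup M] [Module ℂ M] {ρ : AVModule A M}
  {W : Type*} [AddCommGroup W] [Module ℂ W] {Yw : V → ℤ → W →ₗ[ℂ] W}

variable {F : TAM V M →ₗ[ℂ] W}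

lemma Hdeg.isTopDescendant_map
    (hF : ∀ (u : V) (m : ℤ) (z : TAM V M), F (act M u m z) = Yw u m (F z))
    (hFι : ∀ w : M, F (ιM M w) ∈ topLevel A Yw) {d : ℤ}
    {x : TAM V M} (hx : Hdeg A M d x) : IsTopDescendant A Yw d (F x) := by
  induction hx with
  | base w => exact IsTopDescendant.of_mem_topLevel (hFι w)
  | step n m u hu _ ih => exact hF u m _ ▸ ih.mode hu m

lemma idealI_le_ker (hF : ∀ (u : V) (m : ℤ) (z : TAM V M), F (act M u m z) = Yw u m (F z))
    (hA : A.IsNNGraded) (hW : IsWeakModule A.toVertexAlgebra Yw)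
    (hFι : ∀ w : M, F (ιM M w) ∈ topLevel A Yw)
    (hFρ : ∀ (n : ℤ) (u : V), u ∈ A.gr n → ∀ w : M,
      F (ιM M (ρ.ρ u w)) = Yw u (n - 1) (F (ιM M w))) :
    idealI A M ρ ≤ LinearMap.ker F := by
  refine endoClosure_le ?_ fun u m z hz => by
    rw [LinearMap.mem_ker] at hz ⊢
    rw [hF, hz, map_zero]
  rintro z ((⟨n, m, d, u, x, hu, hx, hneg, rfl⟩ | ⟨n, u, w, hu, rfl⟩) |
    ⟨nu, nv, d, p, q, u, v, x, hu, hv, hx, -, -, rfl⟩)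
  · rw [SetLike.mem_coe, LinearMap.mem_ker, hF]
    exact (hx.isTopDescendant_map hF hFι).mode_eq_zero hW hu (by omega)
  · rw [SetLike.mem_coe, LinearMap.mem_ker, map_sub, hF, hFρ n u hu, sub_self]
  · rw [SetLike.mem_coe, LinearMap.mem_ker, map_sub]
    simp only [map_sum, map_smul, hF]
    rw [← (hx.isTopDescendant_map hF hFι).iterate_formula hA hW hu hv, sub_self]

lemma liftQ_act1 (hF : ∀ (u : V) (m : ℤ) (z : TAM V M), F (act M u m z) = Yw u m (F z))
    (hI : idealI A M ρ ≤ LinearMap.ker F) (u : V) (m : ℤ) (ξ : S1 A M ρ) :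
    (idealI A M ρ).liftQ F hI (act1 A M ρ u m ξ) = Yw u m ((idealI A M ρ).liftQ F hI ξ) :=
  Submodule.liftQ_mapQ_apply hI _ (hF u m) ξ

lemma idealJ_le_ker (hF : ∀ (u : V) (m : ℤ) (z : TAM V M), F (act M u m z) = Yw u m (F z))
    (hW : IsWeakModule A.toVertexAlgebra Yw)
    (hFι : ∀ w : M, F (ιM M w) ∈ topLevel A Yw) (hI : idealI A M ρ ≤ LinearMap.ker F) :
    idealJ A M ρ ≤ LinearMap.ker ((idealI A M ρ).liftQ F hI) := by
  refine endoClosure_le ?_ fun u m ξ hξ => by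
    rw [LinearMap.mem_ker] at hξ ⊢
    rw [liftQ_act1 hF, hξ, map_zero]
  rintro ξ ⟨wu, wv, d, K, m, u, v, x, hu, hv, hx, hm, rfl⟩
  rw [SetLike.mem_coe, LinearMap.mem_ker, Submodule.mkQ_apply, Submodule.liftQ_apply]
  simp only [map_sum, map_smul, hF]
  exact (hx.isTopDescendant_map hF hFι).residue_sum_eq_zero hW hu hv hm

lemma SM.hom_ext {g g' : SM A M ρ →ₗ[ℂ] W}
    (hg : ∀ (u : V) (m : ℤ) (x : SM A M ρ), g (act2 A M ρ u m x) = Yw u m (g x))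
    (hg' : ∀ (u : V) (m : ℤ) (x : SM A M ρ), g' (act2 A M ρ u m x) = Yw u m (g' x))
    (he : ∀ w : M, g (eM A M ρ w) = g' (eM A M ρ w)) : g = g' := by
  set π : TAM V M →ₗ[ℂ] SM A M ρ := (idealJ A M ρ).mkQ ∘ₗ (idealI A M ρ).mkQ
  have hπ : Function.Surjective π :=
    (idealJ A M ρ).mkQ_surjective.comp (idealI A M ρ).mkQ_surjective
  have hπact : ∀ (u : V) (m : ℤ) (z : TAM V M), π (act M u m z) = act2 A M ρ u m (π z) :=
    fun _ _ _ => rfl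
  have htop : LinearMap.eqLocus (g ∘ₗ π) (g' ∘ₗ π) = ⊤ :=
    submodule_eq_top_of_act_mem _ he fun u m z hz => by
      simp only [LinearMap.mem_eqLocus, LinearMap.comp_apply, hπact, hg, hg'] at hz ⊢
      rw [hz]
  refine LinearMap.ext fun ξ => ?_
  obtain ⟨z, rfl⟩ := hπ ξ
  exact LinearMap.congr_fun (LinearMap.eqLocus_eq_top.1 htop) z

end UniversalProperty

theorem statement12_general {V : Type*} [AddCommGroup V] [Module ℂ V] (A : GradedVA V)
    (hA : A.IsNNGraded) (M : Type*) [AddCommGroup M] [Module ℂ M]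
    (ρ : AVModule A M)
    (W : Type*) [AddCommGroup W] [Module ℂ W]
    (Yw : V → ℤ → W →ₗ[ℂ] W)
    (hW : IsWeakModule A.toVertexAlgebra Yw)
    (f : M →ₗ[ℂ] W)
    (hf_top : ∀ w : M, f w ∈ topLevel A Yw)
    (hf_mod : ∀ (n : ℤ) (u : V), u ∈ A.gr n → ∀ w : M,
      f (ρ.ρ u w) = Yw u (n - 1) (f w)) :
    ∃! g : SM A M ρ →ₗ[ℂ] W,
      (∀ (u : V) (m : ℤ) (x : SM A M ρ), g (act2 A M ρ u m x) = Yw u m (g x)) ∧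
      ∀ w : M, g (eM A M ρ w) = f w := by
  set F := tensorEval hW.1 hW.2.1 f
  have hF : ∀ (u : V) (m : ℤ) (z : TAM V M), F (act M u m z) = Yw u m (F z) :=
    tensorEval_act hW.1 hW.2.1 f
  have hFι : ∀ w : M, F (ιM M w) = f w := tensorEval_ιM hW.1 hW.2.1 f
  have hFtop : ∀ w : M, F (ιM M w) ∈ topLevel A Yw := fun w => hFι w ▸ hf_top w
  have hI : idealI A M ρ ≤ LinearMap.ker F :=
    idealI_le_ker hF hA hW hFtop fun n u hu w => by rw [hFι, hFι, hf_mod n u hu]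
  have hJ := idealJ_le_ker hF hW hFtop hI
  have hact : ∀ (u : V) (m : ℤ) (x : SM A M ρ), (idealJ A M ρ).liftQ _ hJ (act2 A M ρ u m x) =
      Yw u m ((idealJ A M ρ).liftQ _ hJ x) := fun u m =>
    Submodule.liftQ_mapQ_apply hJ _ (liftQ_act1 hF hI u m)
  refine ⟨(idealJ A M ρ).liftQ _ hJ, ⟨hact, hFι⟩, fun g ⟨hg, hge⟩ => ?_⟩
  exact SM.hom_ext hg hact fun w => (hge w).trans (hFι w).symm

/-- Theorem 5.5, universal property of `S`: for an `A(V)`-module `M`,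
any ℕ-gradable weak `V`-module `W`, and any `A(V)`-module map `f : M → T(W)` into the
top level, there exists a unique `V`-module map `f̃ : S(M) → W` whose restriction to
the top level `T(S(M))` equals `f ∘ e_M⁻¹`, i.e. with `f̃ ∘ e_M = f`. -/
theorem statement12 {V : Type*} [AddCommGroup V] [Module ℂ V] (A : GradedVA V)
    (hA : A.IsNNGraded) (M : Type*) [AddCommGroup M] [Module ℂ M]
    (ρ : AVModule A M)
    (W : Type*) [AddCommGroup W] [Module ℂ W]
    (Yw : V → ℤ → W →ₗ[ℂ] W) (wgr : ℤ → Submodule ℂ W)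
    (hW : IsWeakModule A.toVertexAlgebra Yw) (hWgr : IsNNGradedModule A Yw wgr)
    (f : M →ₗ[ℂ] W)
    (hf_top : ∀ w : M, f w ∈ topLevel A Yw)
    (hf_mod : ∀ (n : ℤ) (u : V), u ∈ A.gr n → ∀ w : M,
      f (ρ.ρ u w) = Yw u (n - 1) (f w)) :
    ∃! g : SM A M ρ →ₗ[ℂ] W,
      (∀ (u : V) (m : ℤ) (x : SM A M ρ), g (act2 A M ρ u m x) = Yw u m (g x)) ∧
      ∀ w : M, g (eM A M ρ w) = f w :=
  statement12_general A hA M ρ W Yw hW f hf_top hf_mod
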